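/- Let N = 2 and let θ = (θ₁, θ₂) ∈ ℝ² satisfy cos(θ₁ − θ₂) ≠ 1. Then θ is a critical point of V (i.e. both partial derivatives of V vanish at θ) if and only if sin(θ₁ − θ₂) = 0 or cos(θ₁ − θ₂) = 1/2. -/

import Mathlib

open Real Finset

/-- The limit potential of the (1+N)-vortex problem:
`V(θ) = -∑_{i<j} (cos(θᵢ-θⱼ) + (1/2)·log(2 - 2cos(θᵢ-θⱼ)))`. -/
noncomputable def vortexPotential (N : ℕ) (θ : Fin N → ℝ) : ℝ :=
  - ∑ i : Fin N, ∑ j : Fin N,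
      if i < j then
        Real.cos (θ i - θ j) + (1 / 2) * Real.log (2 - 2 * Real.cos (θ i - θ j))
      else 0

/-! For `N = 2`, `V` depends only on `t = θ₀ - θ₁`, through `pairPotential`, whose
derivative `sin t · (1 - 2 cos t) / (2 - 2 cos t)` is, up to sign, each partial derivative
of `V`. -/

noncomputable def pairPotential (t : ℝ) : ℝ :=
  -(Real.cos t + (1 / 2) * Real.log (2 - 2 * Real.cos t))

lemma vortexPotential_two :
    vortexPotential 2 = fun θ => pairPotential (θ 0 - θ 1) := by
  funext θ
  simp [vortexPotential, pairPotential, Fin.sum_univ_two]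

lemma hasDerivAt_pairPotential {t : ℝ} (ht : Real.cos t ≠ 1) :
    HasDerivAt pairPotential
      (Real.sin t * (1 - 2 * Real.cos t) / (2 - 2 * Real.cos t)) t := by
  have hpos : 2 - 2 * Real.cos t ≠ 0 := fun h => ht (by linarith)
  have hlog : HasDerivAt (fun s => Real.log (2 - 2 * Real.cos s))
      (2 * Real.sin t / (2 - 2 * Real.cos t)) t := by
    refine HasDerivAt.log ?_ hpos
    simpa using ((Real.hasDerivAt_cos t).const_mul 2).const_sub 2
  refine ((Real.hasDerivAt_cos t).add (hlog.const_mul (1 / 2))).neg.congr_deriv ?_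
  field_simp
  ring

lemma pairPotential_deriv_eq_zero_iff {t : ℝ} (ht : Real.cos t ≠ 1) :
    Real.sin t * (1 - 2 * Real.cos t) / (2 - 2 * Real.cos t) = 0 ↔
      Real.sin t = 0 ∨ Real.cos t = 1 / 2 := by
  have hpos : 2 - 2 * Real.cos t ≠ 0 := fun h => ht (by linarith)
  have hhalf : 1 = 2 * Real.cos t ↔ Real.cos t = 1 / 2 := by
    constructor <;> intro h <;> linarith
  rw [div_eq_zero_iff, or_iff_left hpos, mul_eq_zero, sub_eq_zero, hhalf]

section DifferenceOfCoordinates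

variable {ι : Type*} [Fintype ι] {g : ℝ → ℝ} {g' : ℝ} {θ : ι → ℝ} {i j : ι}

lemma hasFDerivAt_comp_coord_sub (hg : HasDerivAt g g' (θ i - θ j)) :
    HasFDerivAt (fun η : ι → ℝ => g (η i - η j))
      (g' • (ContinuousLinearMap.proj (R := ℝ) (φ := fun _ => ℝ) i -
        ContinuousLinearMap.proj j)) θ :=
  hg.comp_hasFDerivAt θ ((hasFDerivAt_apply i θ).sub (hasFDerivAt_apply j θ))

lemma fderiv_comp_coord_sub_apply_single_eq_zero_iff [DecidableEq ι]
    (hg : HasDerivAt g g' (θ i - θ j)) (hij : i ≠ j) :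
    (∀ k, fderiv ℝ (fun η : ι → ℝ => g (η i - η j)) θ (Pi.single k 1) = 0) ↔ g' = 0 := by
  rw [(hasFDerivAt_comp_coord_sub hg).fderiv]
  exact ⟨fun h => by simpa [hij] using h i, fun h k => by simp [h]⟩

end DifferenceOfCoordinates

/-- For `N = 2` and `θ` with `cos(θ₁-θ₂) ≠ 1`, the point `θ` is a critical
point of `V` (both partial derivatives vanish) if and only if `sin(θ₁-θ₂) = 0` or
`cos(θ₁-θ₂) = 1/2`. -/
theorem two_vortex_critical_points (θ : Fin 2 → ℝ)
    (hθ : Real.cos (θ 0 - θ 1) ≠ 1) :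
    (∀ j : Fin 2, fderiv ℝ (vortexPotential 2) θ (Pi.single j 1) = 0) ↔
      (Real.sin (θ 0 - θ 1) = 0 ∨ Real.cos (θ 0 - θ 1) = 1 / 2) := by
  rw [vortexPotential_two,
    fderiv_comp_coord_sub_apply_single_eq_zero_iff (hasDerivAt_pairPotential hθ) (by decide)]
  exact pairPotential_deriv_eq_zero_iff hθ
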